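/- arXiv:1910.14147 — 7 statements merged into one kernel-verified Lean document; each statement's English description precedes it below -/
import Mathlib

section
/- Let z* ∈ ℝⁿ with ‖z*‖₂ ≤ 1. Then z* is a global minimizer of f(z) = (1/2)·zᵀHz + gᵀz over the closed unit ball {z : ‖z‖₂ ≤ 1} if and only if there exists λ ≥ 0 such that (H + λI)z* + g = 0, λ·(1 − ‖z*‖₂) = 0, and H + λI is positive semidefinite. -/
open Matrix

/-- The Euclidean (`ℓ₂`) norm of a vector in `ℝⁿ`. -/
noncomputable def l2norm {n : ℕ} (x : Fin n → ℝ) : ℝ := Real.sqrt (∑ i, x i ^ 2)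

/-- The trust-region objective `f(z) = (1/2) zᵀ H z + gᵀ z`. -/
noncomputable def quadObj {n : ℕ} (H : Matrix (Fin n) (Fin n) ℝ) (g z : Fin n → ℝ) : ℝ :=
  (1 / 2) * (z ⬝ᵥ H.mulVec z) + g ⬝ᵥ z

/-!
With `w = H z* + g`, sufficiency is the identity
`f z - f z* = ½ (z - z*)ᵀ (H + λ I) (z - z*) + λ/2 (‖z*‖² - ‖z‖²)`, valid whenever
`(H + λ I) z* + g = 0`. For necessity, optimality along segments shows that `z*` minimizes
`z ↦ wᵀ z` over the ball, which forces `w = -λ z*` with `λ = ‖w‖`, and hence complementary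
slackness. The identity then makes `(z - z*)ᵀ (H + λ I) (z - z*)` nonnegative on the sphere through
`z*`, or on the whole ball if `z*` is interior (where `λ = 0`). Reflecting `z*` in hyperplanes
realizes every direction not orthogonal to `z*` as such a chord, and continuity covers the rest.
-/

open Set

section QuadraticForm

variable {ι : Type*} [Fintype ι]

lemma dotProduct_self_nonneg (v : ι → ℝ) : 0 ≤ v ⬝ᵥ v := by
  simpa using dotProduct_self_star_nonneg v

lemma smul_dotProduct_mulVec_smul (A : Matrix ι ι ℝ) (t : ℝ) (u : ι → ℝ) :
    (t • u) ⬝ᵥ A *ᵥ (t • u) = t ^ 2 * (u ⬝ᵥ A *ᵥ u) := by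
  simp only [mulVec_smul, dotProduct_smul, smul_dotProduct, smul_eq_mul]
  ring

lemma nonneg_of_forall_mem_Ioc_nonneg {φ : ℝ → ℝ} (hφ : ContinuousWithinAt φ (Ioi 0) 0)
    (h : ∀ t ∈ Ioc (0 : ℝ) 1, 0 ≤ φ t) : 0 ≤ φ 0 :=
  ge_of_tendsto hφ (Filter.mem_of_superset (Ioc_mem_nhdsGT one_pos) h)

/-- The reflection of `x` in the hyperplane `uᗮ` lies on the sphere through `x` and differs
from `x` by a nonzero multiple of `u`. -/
lemma dotProduct_mulVec_self_nonneg_of_reflection {A : Matrix ι ι ℝ} {x u : ι → ℝ}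
    (hxu : x ⬝ᵥ u ≠ 0) (h : ∀ z, z ⬝ᵥ z = x ⬝ᵥ x → 0 ≤ (z - x) ⬝ᵥ A *ᵥ (z - x)) :
    0 ≤ u ⬝ᵥ A *ᵥ u := by
  have hu : 0 < u ⬝ᵥ u := by
    refine (dotProduct_self_nonneg u).lt_of_ne fun hu => hxu ?_
    rw [dotProduct_self_eq_zero.1 hu.symm, dotProduct_zero]
  set r := 2 * (x ⬝ᵥ u) / (u ⬝ᵥ u)
  have hr : r ≠ 0 := div_ne_zero (mul_ne_zero two_ne_zero hxu) hu.ne'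
  have hsphere : (x - r • u) ⬝ᵥ (x - r • u) = x ⬝ᵥ x := by
    have hru : r * (u ⬝ᵥ u) = 2 * (x ⬝ᵥ u) := div_mul_cancel₀ _ hu.ne'
    simp only [sub_dotProduct, dotProduct_sub, dotProduct_smul, smul_dotProduct, smul_eq_mul,
      dotProduct_comm u x]
    linear_combination r * hru
  have hchord := h _ hsphere
  rw [sub_sub_cancel_left, ← neg_smul, smul_dotProduct_mulVec_smul] at hchord
  exact nonneg_of_mul_nonneg_right hchord (sq_pos_of_ne_zero (neg_ne_zero.2 hr))

theorem posSemidef_of_forall_dotProduct_self_eq {A : Matrix ι ι ℝ} (hA : A.IsSymm)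
    {x : ι → ℝ} (hx : x ≠ 0) (h : ∀ z, z ⬝ᵥ z = x ⬝ᵥ x → 0 ≤ (z - x) ⬝ᵥ A *ᵥ (z - x)) :
    A.PosSemidef := by
  refine posSemidef_iff_dotProduct_mulVec.2 ⟨isHermitian_iff_isSymm.2 hA, fun u => ?_⟩
  rw [star_trivial]
  by_cases hxu : x ⬝ᵥ u = 0
  · have hx : 0 < x ⬝ᵥ x := by simpa using dotProduct_self_star_pos_iff.2 hx
    have hφ : Continuous fun t : ℝ => (u + t • x) ⬝ᵥ A *ᵥ (u + t • x) := by fun_prop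
    simpa using nonneg_of_forall_mem_Ioc_nonneg hφ.continuousWithinAt fun t ht =>
      dotProduct_mulVec_self_nonneg_of_reflection (by
        rw [dotProduct_add, dotProduct_smul, hxu, smul_eq_mul, zero_add]
        exact mul_ne_zero ht.1.ne' hx.ne') h
  · exact dotProduct_mulVec_self_nonneg_of_reflection hxu h

end QuadraticForm

section TrustRegion

variable {n : ℕ}

lemma l2norm_eq_norm (x : Fin n → ℝ) : l2norm x = ‖WithLp.toLp 2 x‖ := by
  simp [l2norm, EuclideanSpace.norm_eq]

lemma l2norm_nonneg (x : Fin n → ℝ) : 0 ≤ l2norm x :=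
  Real.sqrt_nonneg _

lemma l2norm_sq (x : Fin n → ℝ) : l2norm x ^ 2 = x ⬝ᵥ x := by
  rw [l2norm, Real.sq_sqrt (Finset.sum_nonneg fun i _ => sq_nonneg (x i))]
  simp [dotProduct, sq]

lemma l2norm_le_one_iff (x : Fin n → ℝ) : l2norm x ≤ 1 ↔ x ⬝ᵥ x ≤ 1 := by
  rw [← l2norm_sq, sq_le_one_iff₀ (l2norm_nonneg x)]

lemma l2norm_eq_one_iff (x : Fin n → ℝ) : l2norm x = 1 ↔ x ⬝ᵥ x = 1 := by
  rw [← l2norm_sq, pow_eq_one_iff_of_nonneg (l2norm_nonneg x) two_ne_zero]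

lemma l2norm_smul (c : ℝ) (x : Fin n → ℝ) : l2norm (c • x) = |c| * l2norm x := by
  simp only [l2norm_eq_norm, WithLp.toLp_smul, norm_smul, Real.norm_eq_abs]

lemma continuous_l2norm : Continuous (l2norm : (Fin n → ℝ) → ℝ) := by
  unfold l2norm
  fun_prop

lemma convex_l2norm_le_one : Convex ℝ {x : Fin n → ℝ | l2norm x ≤ 1} := by
  have := (convexOn_norm convex_univ).comp_linearMap
    (WithLp.linearEquiv 2 ℝ (Fin n → ℝ)).symm.toLinearMap
  simpa [l2norm_eq_norm] using this.convex_le 1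

lemma quadObj_add {H : Matrix (Fin n) (Fin n) ℝ} (hH : H.IsSymm) (g x d : Fin n → ℝ) :
    quadObj H g (x + d) = quadObj H g x + d ⬝ᵥ (H *ᵥ x + g) + 1 / 2 * (d ⬝ᵥ H *ᵥ d) := by
  have hsymm : x ⬝ᵥ H *ᵥ d = d ⬝ᵥ H *ᵥ x := by
    rw [dotProduct_mulVec, ← mulVec_transpose, hH.eq, dotProduct_comm]
  simp only [quadObj, mulVec_add, dotProduct_add, add_dotProduct, hsymm, dotProduct_comm g]
  ring

lemma quadObj_sub_quadObj_of_stationary {H : Matrix (Fin n) (Fin n) ℝ} (hH : H.IsSymm)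
    {g x : Fin n → ℝ} {lam : ℝ} (hx : (H + lam • (1 : Matrix (Fin n) (Fin n) ℝ)) *ᵥ x + g = 0)
    (z : Fin n → ℝ) :
    quadObj H g z - quadObj H g x =
      1 / 2 * ((z - x) ⬝ᵥ (H + lam • (1 : Matrix (Fin n) (Fin n) ℝ)) *ᵥ (z - x)) +
        lam * (x ⬝ᵥ x - z ⬝ᵥ z) / 2 := by
  have hgrad : H *ᵥ x + g = -lam • x := by
    rw [add_mulVec, smul_mulVec, one_mulVec] at hx
    linear_combination (norm := module) hx
  rw [← add_sub_cancel x z, quadObj_add hH, hgrad, add_sub_cancel_left]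
  simp only [add_mulVec, smul_mulVec, one_mulVec, dotProduct_add, add_dotProduct,
    dotProduct_smul, smul_eq_mul, dotProduct_comm x]
  ring

lemma dotProduct_gradient_nonneg_of_isMinOn {H : Matrix (Fin n) (Fin n) ℝ} (hH : H.IsSymm)
    {g zs z : Fin n → ℝ} (hmin : IsMinOn (quadObj H g) {z | l2norm z ≤ 1} zs)
    (hzs : l2norm zs ≤ 1) (hz : l2norm z ≤ 1) : 0 ≤ (z - zs) ⬝ᵥ (H *ᵥ zs + g) := by
  have hφ : Continuous fun t : ℝ =>
      (z - zs) ⬝ᵥ (H *ᵥ zs + g) + t * (1 / 2 * ((z - zs) ⬝ᵥ H *ᵥ (z - zs))) := by fun_prop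
  simpa using nonneg_of_forall_mem_Ioc_nonneg hφ.continuousWithinAt fun t ht => by
    have hopt := isMinOn_iff.1 hmin _
      (convex_l2norm_le_one.add_smul_sub_mem hzs hz (Ioc_subset_Icc_self ht))
    rw [quadObj_add hH, smul_dotProduct_mulVec_smul, smul_dotProduct, smul_eq_mul] at hopt
    nlinarith [ht.1]

/-- Testing against `y = -w / ‖w‖` gives `w ⬝ᵥ x ≤ -‖w‖`, hence `‖w + ‖w‖ • x‖² ≤ 0`. -/
lemma add_l2norm_smul_eq_zero_of_forall_dotProduct_le {w x : Fin n → ℝ} (hx : l2norm x ≤ 1)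
    (h : ∀ y, l2norm y ≤ 1 → w ⬝ᵥ x ≤ w ⬝ᵥ y) : w + l2norm w • x = 0 := by
  set ν := l2norm w
  have hν : 0 ≤ ν := l2norm_nonneg w
  have hw : w ⬝ᵥ w = ν ^ 2 := (l2norm_sq w).symm
  have hwx : w ⬝ᵥ x ≤ -ν := by
    rcases hν.eq_or_lt with hν0 | hνpos
    · rw [← hν0, zero_pow two_ne_zero, dotProduct_self_eq_zero] at hw
      simp [hw, ← hν0]
    · have hy : l2norm (-ν⁻¹ • w) ≤ 1 := by
        rw [l2norm_smul, abs_neg, abs_inv, abs_of_pos hνpos, inv_mul_cancel₀ hνpos.ne']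
      calc w ⬝ᵥ x ≤ w ⬝ᵥ (-ν⁻¹ • w) := h _ hy
        _ = -ν := by rw [dotProduct_smul, hw, smul_eq_mul]; field_simp
  have hxx : x ⬝ᵥ x ≤ 1 := (l2norm_le_one_iff x).1 hx
  refine dotProduct_self_eq_zero.1 (le_antisymm ?_ (dotProduct_self_nonneg _))
  calc (w + ν • x) ⬝ᵥ (w + ν • x) = ν ^ 2 + 2 * ν * (w ⬝ᵥ x) + ν ^ 2 * (x ⬝ᵥ x) := by
        simp only [dotProduct_add, add_dotProduct, dotProduct_smul, smul_dotProduct, smul_eq_mul,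
          hw, dotProduct_comm x w]
        ring
    _ ≤ 0 := by
        nlinarith [mul_le_mul_of_nonneg_left hwx hν, mul_le_mul_of_nonneg_left hxx (sq_nonneg ν)]

lemma exists_pos_l2norm_add_smul_le_one {x : Fin n → ℝ} (hx : l2norm x < 1) (u : Fin n → ℝ) :
    ∃ t > (0 : ℝ), l2norm (x + t • u) ≤ 1 := by
  have hcont : Continuous fun t : ℝ => l2norm (x + t • u) :=
    continuous_l2norm.comp (by fun_prop)
  have hnear : ∀ᶠ t in nhds (0 : ℝ), l2norm (x + t • u) < 1 :=
    hcont.continuousAt.eventually_lt continuousAt_const (by simpa using hx)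
  obtain ⟨t, hlt, ht⟩ := ((hnear.filter_mono nhdsWithin_le_nhds).and
    (self_mem_nhdsWithin (s := Ioi 0))).exists
  exact ⟨t, ht, hlt.le⟩

theorem posSemidef_of_forall_l2norm_le_one {A : Matrix (Fin n) (Fin n) ℝ} (hA : A.IsSymm)
    {x : Fin n → ℝ} (hx : l2norm x < 1)
    (h : ∀ z, l2norm z ≤ 1 → 0 ≤ (z - x) ⬝ᵥ A *ᵥ (z - x)) : A.PosSemidef := by
  refine posSemidef_iff_dotProduct_mulVec.2 ⟨isHermitian_iff_isSymm.2 hA, fun u => ?_⟩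
  obtain ⟨t, ht, hz⟩ := exists_pos_l2norm_add_smul_le_one hx u
  have hchord := h _ hz
  rw [add_sub_cancel_left, smul_dotProduct_mulVec_smul] at hchord
  simpa using nonneg_of_mul_nonneg_right hchord (by positivity)

lemma add_l2norm_smul_eq_zero_of_isMinOn {H : Matrix (Fin n) (Fin n) ℝ} (hH : H.IsSymm)
    {g zs : Fin n → ℝ} (hzs : l2norm zs ≤ 1)
    (hmin : IsMinOn (quadObj H g) {z | l2norm z ≤ 1} zs) :
    H *ᵥ zs + g + l2norm (H *ᵥ zs + g) • zs = 0 :=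
  add_l2norm_smul_eq_zero_of_forall_dotProduct_le hzs fun y hy => by
    have := dotProduct_gradient_nonneg_of_isMinOn hH hmin hzs hy
    rw [sub_dotProduct, dotProduct_comm y, dotProduct_comm zs] at this
    linarith

lemma l2norm_mul_one_sub_l2norm_eq_zero {w x : Fin n → ℝ} (h : w + l2norm w • x = 0) :
    l2norm w * (1 - l2norm x) = 0 := by
  have hw : l2norm w = l2norm w * l2norm x := by
    calc l2norm w = l2norm (-l2norm w • x) := by rw [neg_smul, ← eq_neg_of_add_eq_zero_left h]
      _ = l2norm w * l2norm x := by rw [l2norm_smul, abs_neg, abs_of_nonneg (l2norm_nonneg _)]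
  linarith

theorem exists_KKT_of_isMinOn {H : Matrix (Fin n) (Fin n) ℝ} (hH : H.IsSymm) {g zs : Fin n → ℝ}
    (hzs : l2norm zs ≤ 1) (hmin : IsMinOn (quadObj H g) {z | l2norm z ≤ 1} zs) :
    ∃ lam : ℝ, 0 ≤ lam ∧
      (H + lam • (1 : Matrix (Fin n) (Fin n) ℝ)) *ᵥ zs + g = 0 ∧
      lam * (1 - l2norm zs) = 0 ∧
      (H + lam • (1 : Matrix (Fin n) (Fin n) ℝ)).PosSemidef := by
  have hgrad := add_l2norm_smul_eq_zero_of_isMinOn hH hzs hmin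
  have hslack := l2norm_mul_one_sub_l2norm_eq_zero hgrad
  set lam := l2norm (H *ᵥ zs + g)
  have hstat : (H + lam • (1 : Matrix (Fin n) (Fin n) ℝ)) *ᵥ zs + g = 0 := by
    rw [add_mulVec, smul_mulVec, one_mulVec, ← hgrad]
    abel
  have hchord : ∀ z, l2norm z ≤ 1 → lam * (zs ⬝ᵥ zs - z ⬝ᵥ z) = 0 →
      0 ≤ (z - zs) ⬝ᵥ (H + lam • (1 : Matrix (Fin n) (Fin n) ℝ)) *ᵥ (z - zs) := by
    intro z hz hlam
    have hid := quadObj_sub_quadObj_of_stationary hH hstat z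
    have := isMinOn_iff.1 hmin z hz
    rw [hlam, zero_div, add_zero] at hid
    linarith
  refine ⟨lam, l2norm_nonneg _, hstat, hslack, ?_⟩
  have hA : (H + lam • (1 : Matrix (Fin n) (Fin n) ℝ)).IsSymm := hH.add (isSymm_one.smul lam)
  rcases hzs.lt_or_eq with hlt | heq
  · have hlam : lam = 0 := (mul_eq_zero.1 hslack).resolve_right (by linarith)
    exact posSemidef_of_forall_l2norm_le_one hA hlt fun z hz => hchord z hz (by simp [hlam])
  · have hzz : zs ⬝ᵥ zs = 1 := (l2norm_eq_one_iff zs).1 heq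
    have hzs0 : zs ≠ 0 := by rintro rfl; simp at hzz
    refine posSemidef_of_forall_dotProduct_self_eq hA hzs0 fun z hz => hchord z ?_ (by simp [hz])
    rw [l2norm_le_one_iff, hz, hzz]

theorem isMinOn_of_KKT {H : Matrix (Fin n) (Fin n) ℝ} (hH : H.IsSymm) {g zs : Fin n → ℝ}
    {lam : ℝ} (hlam : 0 ≤ lam) (hstat : (H + lam • (1 : Matrix (Fin n) (Fin n) ℝ)) *ᵥ zs + g = 0)
    (hslack : lam * (1 - l2norm zs) = 0)
    (hpsd : (H + lam • (1 : Matrix (Fin n) (Fin n) ℝ)).PosSemidef) :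
    IsMinOn (quadObj H g) {z | l2norm z ≤ 1} zs := by
  refine isMinOn_iff.2 fun z hz => ?_
  have hid := quadObj_sub_quadObj_of_stationary hH hstat z
  have hquad := hpsd.dotProduct_mulVec_nonneg (z - zs)
  rw [star_trivial] at hquad
  have hpenalty : 0 ≤ lam * (zs ⬝ᵥ zs - z ⬝ᵥ z) := by
    rcases mul_eq_zero.1 hslack with h0 | hnorm
    · simp [h0]
    · rw [(l2norm_eq_one_iff zs).1 (by linarith)]
      exact mul_nonneg hlam (by linarith [(l2norm_le_one_iff z).1 hz])
  linarith

end TrustRegion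

/-- Global optimality over the closed unit ball is equivalent to the KKT conditions:
`(H + λI) z* + g = 0`, `λ (1 − ‖z*‖) = 0`, and `H + λI ⪰ 0` for some `λ ≥ 0`. -/
theorem trust_region_global_opt_iff_KKT {n : ℕ}
    (H : Matrix (Fin n) (Fin n) ℝ) (hH : H.IsSymm) (g : Fin n → ℝ)
    (zs : Fin n → ℝ) (hzs : l2norm zs ≤ 1) :
    (∀ z : Fin n → ℝ, l2norm z ≤ 1 → quadObj H g zs ≤ quadObj H g z) ↔
      (∃ lam : ℝ, 0 ≤ lam ∧
        (H + lam • (1 : Matrix (Fin n) (Fin n) ℝ)).mulVec zs + g = 0 ∧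
        lam * (1 - l2norm zs) = 0 ∧
        (H + lam • (1 : Matrix (Fin n) (Fin n) ℝ)).PosSemidef) := by
  refine ⟨fun hmin => exists_KKT_of_isMinOn hH hzs (isMinOn_iff.2 hmin), ?_⟩
  rintro ⟨lam, hlam, hstat, hslack, hpsd⟩
  exact isMinOn_iff.1 (isMinOn_of_KKT hH hlam hstat hslack hpsd)
end

section
/- Assume λ₁ < 0 and gᵀv₁ ≠ 0. Then every global minimizer z* of f over the closed unit ball satisfies ‖z*‖₂ = 1, any multiplier λ ≥ 0 satisfying (H + λI)z* + g = 0, λ·(1 − ‖z*‖₂) = 0 and H + λI positive semidefinite in fact satisfies λ > −λ₁ (so H + λI is positive definite), and z* = −(H + λI)⁻¹ g. -/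
open Matrix

/-- The Euclidean (`ℓ₂`) norm of a vector in `ℝⁿ`. -/
noncomputable def euclNorm {n : ℕ} (x : Fin n → ℝ) : ℝ := Real.sqrt (∑ i, x i ^ 2)

/-!
A minimizer strictly inside the ball would be a local minimizer of `f`, which forces `H ⪰ 0`;
this is impossible when `λ₁ < 0`. For a KKT multiplier `λ`, positive semidefiniteness of
`H + λI` tested on `v₁` gives `λ ≥ -λ₁`. Equality would put `v₁` in the kernel of the symmetric
matrix `H + λI`, which is orthogonal to its range, while `g = -(H + λI) z*` lies in the range and
`gᵀv₁ ≠ 0`. Once `λ > -λ₁`, no eigenvalue of `H` equals `-λ`, so `H + λI` has trivial kernel,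
is positive definite, and `z* = -(H + λI)⁻¹ g`.
-/

open Filter Topology

lemma continuous_euclNorm {n : ℕ} : Continuous (euclNorm (n := n)) := by
  unfold euclNorm
  fun_prop

lemma euclNorm_eq_one_iff {n : ℕ} {x : Fin n → ℝ} : euclNorm x = 1 ↔ x ⬝ᵥ x = 1 := by
  simp [euclNorm, dotProduct, sq]

lemma quadObj_add_add_quadObj_sub {n : ℕ} (H : Matrix (Fin n) (Fin n) ℝ) (g z w : Fin n → ℝ) :
    quadObj H g (z + w) + quadObj H g (z - w) = 2 * quadObj H g z + w ⬝ᵥ H *ᵥ w := by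
  simp only [quadObj, mulVec_add, mulVec_sub, dotProduct_add, add_dotProduct, dotProduct_sub,
    sub_dotProduct]
  ring

lemma IsLocalMin.dotProduct_mulVec_nonneg {n : ℕ} {H : Matrix (Fin n) (Fin n) ℝ}
    {g z : Fin n → ℝ} (hz : IsLocalMin (quadObj H g) z) (w : Fin n → ℝ) :
    0 ≤ w ⬝ᵥ H *ᵥ w := by
  have hplus : ∀ᶠ t in 𝓝 (0 : ℝ), quadObj H g z ≤ quadObj H g (z + t • w) :=
    (Continuous.tendsto' (by fun_prop) 0 z (by simp)).eventually hz
  have hminus : ∀ᶠ t in 𝓝 (0 : ℝ), quadObj H g z ≤ quadObj H g (z - t • w) :=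
    (Continuous.tendsto' (by fun_prop) 0 z (by simp)).eventually hz
  have hne : ∀ᶠ t in 𝓝[≠] (0 : ℝ), t ≠ 0 := self_mem_nhdsWithin
  obtain ⟨t, ⟨hzp, hzm⟩, ht⟩ :=
    ((hplus.and hminus).filter_mono nhdsWithin_le_nhds |>.and hne).exists
  have hsum := quadObj_add_add_quadObj_sub H g z (t • w)
  rw [mulVec_smul, dotProduct_smul, smul_dotProduct, smul_eq_mul, smul_eq_mul] at hsum
  nlinarith [sq_pos_of_ne_zero ht]

lemma euclNorm_eq_one_of_isMinOn {n : ℕ} {H : Matrix (Fin n) (Fin n) ℝ} {g zs : Fin n → ℝ}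
    (hH : ∃ w, w ⬝ᵥ H *ᵥ w < 0) (hzs : euclNorm zs ≤ 1)
    (hmin : IsMinOn (quadObj H g) {z | euclNorm z ≤ 1} zs) : euclNorm zs = 1 := by
  refine hzs.eq_of_not_lt fun hlt => ?_
  obtain ⟨w, hw⟩ := hH
  have hball : {z | euclNorm z ≤ 1} ∈ 𝓝 zs :=
    ((continuous_euclNorm.tendsto zs).eventually (gt_mem_nhds hlt)).mono fun _ => le_of_lt
  exact hw.not_ge ((hmin.isLocalMin hball).dotProduct_mulVec_nonneg w)

lemma Matrix.IsSymm.mulVec_dotProduct_eq_zero {ι R : Type*} [Fintype ι] [CommSemiring R]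
    {M : Matrix ι ι R} (hM : M.IsSymm) {v : ι → R} (hv : M *ᵥ v = 0) (z : ι → R) :
    M *ᵥ z ⬝ᵥ v = 0 := by
  rw [dotProduct_comm, dotProduct_mulVec, ← hM.eq, vecMul_transpose, hv, zero_dotProduct]

section ShiftedMatrix

variable {ι : Type*} [Fintype ι] [DecidableEq ι] {H : Matrix ι ι ℝ} {lam μ : ℝ}

lemma add_smul_one_mulVec (v : ι → ℝ) :
    (H + lam • (1 : Matrix ι ι ℝ)) *ᵥ v = H *ᵥ v + lam • v := by
  simp [add_mulVec, smul_mulVec]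

lemma neg_le_of_posSemidef_add_smul_one (hPSD : (H + lam • (1 : Matrix ι ι ℝ)).PosSemidef)
    {v : ι → ℝ} (hv : v ≠ 0) (hHv : H *ᵥ v = μ • v) : -μ ≤ lam := by
  have hvv : 0 < v ⬝ᵥ v := by simpa using dotProduct_star_self_pos_iff.mpr hv
  have h := hPSD.dotProduct_mulVec_nonneg v
  rw [add_smul_one_mulVec, hHv, ← add_smul] at h
  simp only [star_trivial, dotProduct_smul, smul_eq_mul] at h
  nlinarith

lemma posDef_add_smul_one_of_lt (hPSD : (H + lam • (1 : Matrix ι ι ℝ)).PosSemidef)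
    {lam1 : ℝ} (hmin : ∀ (μ : ℝ) (w : ι → ℝ), w ≠ 0 → H *ᵥ w = μ • w → lam1 ≤ μ)
    (hlt : -lam1 < lam) : (H + lam • (1 : Matrix ι ι ℝ)).PosDef := by
  refine hPSD.posDef_iff_isUnit.mpr <| mulVec_injective_iff_isUnit.mp <|
    (injective_iff_map_eq_zero (H + lam • (1 : Matrix ι ι ℝ)).mulVecLin).mpr fun x hx => ?_
  by_contra hx0
  have hHx : H *ᵥ x = (-lam) • x := by
    rw [mulVecLin_apply, add_smul_one_mulVec] at hx
    rw [neg_smul]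
    exact eq_neg_of_add_eq_zero_left hx
  linarith [hmin _ x hx0 hHx]

end ShiftedMatrix

lemma eq_neg_inv_mulVec_of_mulVec_add_eq_zero {ι R : Type*} [Fintype ι] [DecidableEq ι]
    [CommRing R] {M : Matrix ι ι R} (hM : IsUnit M) {z g : ι → R} (h : M *ᵥ z + g = 0) :
    z = -(M⁻¹ *ᵥ g) := by
  rw [← mulVec_neg, ← eq_neg_of_add_eq_zero_left h, mulVec_mulVec,
    nonsing_inv_mul _ ((isUnit_iff_isUnit_det M).mp hM), one_mulVec]

/-- In the easy case (`λ₁ < 0`, `gᵀv₁ ≠ 0`), every global minimizer `z*` of `f` over the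
closed unit ball lies on the sphere, every KKT multiplier `λ` satisfies `λ > −λ₁`
(so `H + λI ≻ 0`), and `z* = −(H + λI)⁻¹ g`. -/
theorem trust_region_easy_case_solution_structure {n : ℕ}
    (H : Matrix (Fin n) (Fin n) ℝ) (hH : H.IsSymm) (g : Fin n → ℝ)
    (lam1 : ℝ) (v1 : Fin n → ℝ)
    (hv1_unit : euclNorm v1 = 1) (hv1_eig : H.mulVec v1 = lam1 • v1)
    (hlam1_min : ∀ (μ : ℝ) (w : Fin n → ℝ), w ≠ 0 → H.mulVec w = μ • w → lam1 ≤ μ)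
    (hlam1_neg : lam1 < 0) (hg : g ⬝ᵥ v1 ≠ 0)
    (zs : Fin n → ℝ) (hzs_feas : euclNorm zs ≤ 1)
    (hzs_min : ∀ z : Fin n → ℝ, euclNorm z ≤ 1 → quadObj H g zs ≤ quadObj H g z) :
    euclNorm zs = 1 ∧
      ∀ lam : ℝ, 0 ≤ lam →
        (H + lam • (1 : Matrix (Fin n) (Fin n) ℝ)).mulVec zs + g = 0 →
        lam * (1 - euclNorm zs) = 0 →
        (H + lam • (1 : Matrix (Fin n) (Fin n) ℝ)).PosSemidef →
        lam > -lam1 ∧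
          (H + lam • (1 : Matrix (Fin n) (Fin n) ℝ)).PosDef ∧
          zs = -((H + lam • (1 : Matrix (Fin n) (Fin n) ℝ))⁻¹.mulVec g) := by
  have hv1v1 : v1 ⬝ᵥ v1 = 1 := euclNorm_eq_one_iff.mp hv1_unit
  have hv1 : v1 ≠ 0 := by
    rintro rfl
    simp at hv1v1
  refine ⟨euclNorm_eq_one_of_isMinOn ⟨v1, by simpa [hv1_eig, hv1v1]⟩ hzs_feas hzs_min,
    fun lam _ hKKT _ hPSD => ?_⟩
  have hne : lam ≠ -lam1 := by
    rintro rfl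
    have hker : (H + (-lam1) • (1 : Matrix (Fin n) (Fin n) ℝ)) *ᵥ v1 = 0 := by
      rw [add_smul_one_mulVec, hv1_eig, neg_smul, add_neg_cancel]
    have hgv1 := (hH.add (isSymm_one.smul (-lam1))).mulVec_dotProduct_eq_zero hker zs
    rw [eq_neg_of_add_eq_zero_left hKKT, neg_dotProduct, neg_eq_zero] at hgv1
    exact hg hgv1
  have hgt : -lam1 < lam :=
    (neg_le_of_posSemidef_add_smul_one hPSD hv1 hv1_eig).lt_of_ne (Ne.symm hne)
  have hPD := posDef_add_smul_one_of_lt hPSD hlam1_min hgt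
  exact ⟨hgt, hPD, eq_neg_inv_mulVec_of_mulVec_add_eq_zero hPD.isUnit hKKT⟩
end

section
/- Assume λ₁ < 0 and gᵀv₁ ≠ 0. Let s ∈ ℝⁿ with ‖s‖₂ ≤ 1 be a stationary point of the trust-region problem, i.e. there exists λ ≥ 0 with (H + λI)s + g = 0 and λ·(1 − ‖s‖₂) = 0. If additionally (sᵀv₁)·(gᵀv₁) ≤ 0, then s is a global minimizer of f over the closed unit ball. -/
/-!
Stationarity says `g = -(H + λI) s`, so `gᵀv₁ = -(λ₁ + λ)(sᵀv₁)`. Hence `gᵀv₁ ≠ 0` forces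
`sᵀv₁ ≠ 0`, and the sign condition `(sᵀv₁)(gᵀv₁) ≤ 0` becomes `(λ₁ + λ)(sᵀv₁)² ≥ 0`, i.e.
`λ₁ + λ ≥ 0`. Then `H + λI` is positive semidefinite, so `s`, a critical point of the convex
quadratic `f + (λ/2)‖·‖²`, minimizes it on all of `ℝⁿ`; complementarity turns this into
`f(s) ≤ f(z) + (λ/2)(‖z‖² - ‖s‖²) ≤ f(z)` on the unit ball.
-/

open Matrix

/-- The Euclidean (`ℓ₂`) norm of a vector in `ℝⁿ`. -/
noncomputable def enorm {n : ℕ} (x : Fin n → ℝ) : ℝ := Real.sqrt (∑ i, x i ^ 2)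

namespace Matrix

variable {ι : Type*} [Fintype ι]

theorem IsSymm.dotProduct_mulVec_comm {A : Matrix ι ι ℝ} (hA : A.IsSymm) (x y : ι → ℝ) :
    x ⬝ᵥ A *ᵥ y = y ⬝ᵥ A *ᵥ x := by
  rw [dotProduct_mulVec, ← mulVec_transpose, hA.eq, dotProduct_comm]

theorem IsSymm.dotProduct_eq_neg_mul_of_mulVec_add_eq_zero {A : Matrix ι ι ℝ}
    (hA : A.IsSymm) {g s v : ι → ℝ} (hs : A *ᵥ s + g = 0) {μ : ℝ}
    (hv : A *ᵥ v = μ • v) : g ⬝ᵥ v = -(μ * (s ⬝ᵥ v)) := by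
  rw [eq_neg_of_add_eq_zero_right hs, neg_dotProduct, dotProduct_comm,
    ← hA.dotProduct_mulVec_comm, hv, dotProduct_smul, smul_eq_mul]

theorem IsSymm.nonneg_of_mulVec_add_eq_zero_of_dotProduct_mul_nonpos {A : Matrix ι ι ℝ}
    (hA : A.IsSymm) {g s v : ι → ℝ} (hs : A *ᵥ s + g = 0) {μ : ℝ}
    (hv : A *ᵥ v = μ • v) (hg : g ⬝ᵥ v ≠ 0) (hcorr : (s ⬝ᵥ v) * (g ⬝ᵥ v) ≤ 0) : 0 ≤ μ := by
  have hgv := hA.dotProduct_eq_neg_mul_of_mulVec_add_eq_zero hs hv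
  have hsv : s ⬝ᵥ v ≠ 0 := fun h ↦ hg (by rw [hgv, h, mul_zero, neg_zero])
  rw [hgv] at hcorr
  nlinarith [mul_self_pos.mpr hsv]

theorem IsHermitian.le_eigenvalues [DecidableEq ι] {A : Matrix ι ι ℝ} (hA : A.IsHermitian)
    {c : ℝ} (hc : ∀ (μ : ℝ) (w : ι → ℝ), w ≠ 0 → A *ᵥ w = μ • w → c ≤ μ) (i : ι) :
    c ≤ hA.eigenvalues i := by
  refine hc _ _ (fun h ↦ ?_) (hA.mulVec_eigenvectorBasis i)
  exact hA.eigenvectorBasis.orthonormal.ne_zero i (WithLp.ofLp_injective 2 h)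

theorem IsHermitian.posSemidef_add_smul_one [DecidableEq ι] {A : Matrix ι ι ℝ}
    (hA : A.IsHermitian) {c : ℝ} (hc : ∀ i, 0 ≤ hA.eigenvalues i + c) :
    (A + c • (1 : Matrix ι ι ℝ)).PosSemidef := by
  refine posSemidef_iff_isHermitian_and_spectrum_nonneg.mpr
    ⟨hA.add (isHermitian_one.smul (.all c)), ?_⟩
  rw [← Algebra.algebraMap_eq_smul_one, ← spectrum.add_singleton_eq,
    hA.spectrum_real_eq_range_eigenvalues]
  rintro _ ⟨_, ⟨i, rfl⟩, _, rfl, rfl⟩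
  exact hc i

end Matrix

theorem enorm_sq {n : ℕ} (x : Fin n → ℝ) : _root_.enorm x ^ 2 = x ⬝ᵥ x := by
  rw [_root_.enorm, Real.sq_sqrt (by positivity)]
  simp [dotProduct, sq]

theorem dotProduct_self_le_one_of_enorm_le_one {n : ℕ} {x : Fin n → ℝ}
    (hx : _root_.enorm x ≤ 1) : x ⬝ᵥ x ≤ 1 := by
  rw [← enorm_sq]
  exact pow_le_one₀ (Real.sqrt_nonneg _) hx

theorem quadObj_add_smul_one {n : ℕ} (H : Matrix (Fin n) (Fin n) ℝ) (c : ℝ) (g z : Fin n → ℝ) :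
    quadObj (H + c • 1) g z = quadObj H g z + c / 2 * (z ⬝ᵥ z) := by
  simp only [quadObj, add_mulVec, smul_mulVec, one_mulVec, dotProduct_add, dotProduct_smul,
    smul_eq_mul]
  ring

theorem quadObj_sub_quadObj_of_mulVec_add_eq_zero {n : ℕ} {A : Matrix (Fin n) (Fin n) ℝ}
    (hA : A.IsSymm) {g s : Fin n → ℝ} (hs : A *ᵥ s + g = 0) (z : Fin n → ℝ) :
    quadObj A g z - quadObj A g s = 1 / 2 * ((z - s) ⬝ᵥ A *ᵥ (z - s)) := by
  obtain rfl : g = -(A *ᵥ s) := eq_neg_of_add_eq_zero_right hs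
  simp only [quadObj, mulVec_sub, dotProduct_sub, sub_dotProduct, neg_dotProduct,
    dotProduct_comm (A *ᵥ s), hA.dotProduct_mulVec_comm z s]
  ring

theorem quadObj_le_of_mulVec_add_eq_zero {n : ℕ} {A : Matrix (Fin n) (Fin n) ℝ}
    (hA : A.PosSemidef) {g s : Fin n → ℝ} (hs : A *ᵥ s + g = 0) (z : Fin n → ℝ) :
    quadObj A g s ≤ quadObj A g z := by
  have h := quadObj_sub_quadObj_of_mulVec_add_eq_zero
    (isHermitian_iff_isSymm.mp hA.isHermitian) hs z
  have := hA.dotProduct_mulVec_nonneg (z - s)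
  rw [star_trivial] at this
  linarith

theorem trust_region_stationary_nonpos_corr_is_global_min_general {n : ℕ}
    (H : Matrix (Fin n) (Fin n) ℝ) (hH : H.IsSymm) (g : Fin n → ℝ)
    (lam1 : ℝ) (v1 : Fin n → ℝ)
    (hv1_eig : H.mulVec v1 = lam1 • v1)
    (hlam1_min : ∀ (μ : ℝ) (w : Fin n → ℝ), w ≠ 0 → H.mulVec w = μ • w → lam1 ≤ μ)
    (hg : g ⬝ᵥ v1 ≠ 0)
    (s : Fin n → ℝ)
    (lam : ℝ) (hlam_nonneg : 0 ≤ lam)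
    (hstat : (H + lam • (1 : Matrix (Fin n) (Fin n) ℝ)).mulVec s + g = 0)
    (hcomp : lam * (1 - _root_.enorm s) = 0)
    (hcorr : (s ⬝ᵥ v1) * (g ⬝ᵥ v1) ≤ 0) :
    ∀ z : Fin n → ℝ, _root_.enorm z ≤ 1 → quadObj H g s ≤ quadObj H g z := by
  have hHerm : H.IsHermitian := isHermitian_iff_isSymm.mpr hH
  have hv1_shift : (H + lam • 1) *ᵥ v1 = (lam1 + lam) • v1 := by
    rw [add_mulVec, smul_mulVec, one_mulVec, hv1_eig, add_smul]
  have hshift : 0 ≤ lam1 + lam :=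
    (hH.add (isSymm_one.smul lam)).nonneg_of_mulVec_add_eq_zero_of_dotProduct_mul_nonpos
      hstat hv1_shift hg hcorr
  have hpsd := hHerm.posSemidef_add_smul_one (c := lam) fun i ↦ by
    linarith [hHerm.le_eigenvalues hlam1_min i]
  intro z hz
  have hcompl : lam * (z ⬝ᵥ z) ≤ lam * (s ⬝ᵥ s) := by
    rcases mul_eq_zero.mp hcomp with h | h
    · simp [h]
    · rw [← enorm_sq s, show _root_.enorm s = 1 by linarith, one_pow]
      exact mul_le_mul_of_nonneg_left (dotProduct_self_le_one_of_enorm_le_one hz) hlam_nonneg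
  have := quadObj_le_of_mulVec_add_eq_zero hpsd hstat z
  rw [quadObj_add_smul_one, quadObj_add_smul_one] at this
  linarith

/-- In the easy case (`λ₁ < 0`, `gᵀv₁ ≠ 0`), any stationary point `s` of the trust-region
problem with `(sᵀv₁)(gᵀv₁) ≤ 0` is a global minimizer over the closed unit ball. -/
theorem trust_region_stationary_nonpos_corr_is_global_min {n : ℕ}
    (H : Matrix (Fin n) (Fin n) ℝ) (hH : H.IsSymm) (g : Fin n → ℝ)
    (lam1 : ℝ) (v1 : Fin n → ℝ)
    (hv1_unit : _root_.enorm v1 = 1) (hv1_eig : H.mulVec v1 = lam1 • v1)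
    (hlam1_min : ∀ (μ : ℝ) (w : Fin n → ℝ), w ≠ 0 → H.mulVec w = μ • w → lam1 ≤ μ)
    (hlam1_neg : lam1 < 0) (hg : g ⬝ᵥ v1 ≠ 0)
    (s : Fin n → ℝ) (hs_feas : _root_.enorm s ≤ 1)
    (lam : ℝ) (hlam_nonneg : 0 ≤ lam)
    (hstat : (H + lam • (1 : Matrix (Fin n) (Fin n) ℝ)).mulVec s + g = 0)
    (hcomp : lam * (1 - _root_.enorm s) = 0)
    (hcorr : (s ⬝ᵥ v1) * (g ⬝ᵥ v1) ≤ 0) :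
    ∀ z : Fin n → ℝ, _root_.enorm z ≤ 1 → quadObj H g s ≤ quadObj H g z :=
  trust_region_stationary_nonpos_corr_is_global_min_general H hH g lam1 v1 hv1_eig hlam1_min hg s
    lam hlam_nonneg hstat hcomp hcorr
end

section
/- Let v be a unit eigenvector of H with eigenvalue μ, let 0 < η < 1/β, and let z ∈ ℝⁿ. If (zᵀv)·(gᵀv) ≤ 0, then the projected gradient step z⁺ = P(z − η(Hz + g)) satisfies (z⁺ᵀv)·(gᵀv) ≤ 0. -/
/-!
Along the unit eigenvector `v`, the gradient step acts as the scalar affine map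
`t ↦ (1 - ημ) t - η (gᵀv)` on `t = zᵀv`. Since `|μ| ≤ β` and `ηβ < 1`, the factor `1 - ημ` is
positive, so both terms have the sign opposite to `gᵀv`. Projecting onto the unit ball only
rescales by a nonnegative factor, which keeps that sign.
-/

open Matrix

/-- The Euclidean (`ℓ₂`) norm of a vector in `ℝⁿ`. -/
noncomputable def euclidNorm {n : ℕ} (x : Fin n → ℝ) : ℝ := Real.sqrt (∑ i, x i ^ 2)

/-- Euclidean metric projection onto the closed unit ball `{z : ‖z‖₂ ≤ 1}`. -/
noncomputable def projBall {n : ℕ} (x : Fin n → ℝ) : Fin n → ℝ :=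
  if euclidNorm x ≤ 1 then x else (euclidNorm x)⁻¹ • x

/-- `β` is the (Euclidean) operator norm of `H`: the least nonnegative constant `c`
with `‖Hx‖₂ ≤ c ‖x‖₂` for all `x`. -/
def IsOpNorm {n : ℕ} (H : Matrix (Fin n) (Fin n) ℝ) (β : ℝ) : Prop :=
  IsLeast {c : ℝ | 0 ≤ c ∧ ∀ x : Fin n → ℝ, euclidNorm (H.mulVec x) ≤ c * euclidNorm x} β

lemma euclidNorm_nonneg {n : ℕ} (x : Fin n → ℝ) : 0 ≤ euclidNorm x := Real.sqrt_nonneg _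

lemma euclidNorm_smul {n : ℕ} (c : ℝ) (x : Fin n → ℝ) :
    euclidNorm (c • x) = |c| * euclidNorm x := by
  unfold euclidNorm
  rw [← Real.sqrt_sq_eq_abs, ← Real.sqrt_mul (sq_nonneg c), Finset.mul_sum]
  simp only [Pi.smul_apply, smul_eq_mul, mul_pow]

lemma exists_nonneg_smul_eq_projBall {n : ℕ} (x : Fin n → ℝ) :
    ∃ c : ℝ, 0 ≤ c ∧ projBall x = c • x := by
  unfold projBall
  split_ifs
  · exact ⟨1, zero_le_one, (one_smul ℝ x).symm⟩
  · exact ⟨_, inv_nonneg.mpr (euclidNorm_nonneg x), rfl⟩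

lemma IsOpNorm.abs_le_of_mulVec_eq_smul {n : ℕ} {H : Matrix (Fin n) (Fin n) ℝ} {β μ : ℝ}
    {v : Fin n → ℝ} (hβ : IsOpNorm H β) (hv_pos : 0 < euclidNorm v) (hv_eig : H *ᵥ v = μ • v) :
    |μ| ≤ β := by
  have hbound := hβ.1.2 v
  rw [hv_eig, euclidNorm_smul] at hbound
  exact le_of_mul_le_mul_right hbound hv_pos

lemma Matrix.IsSymm.mulVec_dotProduct_of_mulVec_eq_smul {ι R : Type*} [Fintype ι] [CommRing R]
    {H : Matrix ι ι R} (hH : H.IsSymm) {μ : R} {v : ι → R} (hv_eig : H *ᵥ v = μ • v)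
    (z : ι → R) : H *ᵥ z ⬝ᵥ v = μ * (z ⬝ᵥ v) := by
  rw [dotProduct_comm, dotProduct_mulVec, ← mulVec_transpose, hH.eq, hv_eig, smul_dotProduct,
    smul_eq_mul, dotProduct_comm]

lemma gradientStep_dotProduct_of_mulVec_eq_smul {ι R : Type*} [Fintype ι] [CommRing R]
    {H : Matrix ι ι R} (hH : H.IsSymm) {μ : R} {v : ι → R} (hv_eig : H *ᵥ v = μ • v)
    (η : R) (z g : ι → R) :
    (z - η • (H *ᵥ z + g)) ⬝ᵥ v = (1 - η * μ) * (z ⬝ᵥ v) - η * (g ⬝ᵥ v) := by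
  rw [sub_dotProduct, smul_dotProduct, add_dotProduct,
    hH.mulVec_dotProduct_of_mulVec_eq_smul hv_eig, smul_eq_mul]
  ring

lemma mul_le_one_of_lt_one_div {η β : ℝ} (hη_pos : 0 < η) (hη_lt : η < 1 / β) : η * β ≤ 1 := by
  have hβ_pos : 0 < β := by
    by_contra! hβ_nonpos
    linarith [one_div_nonpos.mpr hβ_nonpos]
  exact ((lt_div_iff₀ hβ_pos).mp hη_lt).le

/-- A projected gradient step preserves the sign condition `(zᵀv)(gᵀv) ≤ 0` along any
unit eigenvector `v` of `H`, provided `0 < η < 1/β`. -/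
theorem projected_gradient_step_preserves_sign {n : ℕ}
    (H : Matrix (Fin n) (Fin n) ℝ) (hH : H.IsSymm) (g : Fin n → ℝ)
    (β : ℝ) (hβ : IsOpNorm H β)
    (μ : ℝ) (v : Fin n → ℝ) (hv_unit : euclidNorm v = 1) (hv_eig : H.mulVec v = μ • v)
    (η : ℝ) (hη_pos : 0 < η) (hη_lt : η < 1 / β)
    (z : Fin n → ℝ) (hcorr : (z ⬝ᵥ v) * (g ⬝ᵥ v) ≤ 0) :
    (projBall (z - η • (H.mulVec z + g)) ⬝ᵥ v) * (g ⬝ᵥ v) ≤ 0 := by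
  have hμ : |μ| ≤ β := hβ.abs_le_of_mulVec_eq_smul (hv_unit ▸ one_pos) hv_eig
  have hημ : 0 ≤ 1 - η * μ := sub_nonneg.mpr <| calc
    η * μ ≤ η * β := mul_le_mul_of_nonneg_left ((le_abs_self μ).trans hμ) hη_pos.le
    _ ≤ 1 := mul_le_one_of_lt_one_div hη_pos hη_lt
  have hstep : ((z - η • (H *ᵥ z + g)) ⬝ᵥ v) * (g ⬝ᵥ v) ≤ 0 := by
    rw [gradientStep_dotProduct_of_mulVec_eq_smul hH hv_eig, sub_mul, mul_assoc, mul_assoc]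
    have hdrift : 0 ≤ η * ((g ⬝ᵥ v) * (g ⬝ᵥ v)) :=
      mul_nonneg hη_pos.le (mul_self_nonneg _)
    linarith [mul_nonpos_of_nonneg_of_nonpos hημ hcorr]
  obtain ⟨c, hc, hproj⟩ := exists_nonneg_smul_eq_projBall (z - η • (H *ᵥ z + g))
  rw [hproj, smul_dotProduct, smul_eq_mul, mul_assoc]
  exact mul_nonpos_of_nonneg_of_nonpos hc hstep
end

section
/- (Second derivative of f along the sphere) Let x ∈ ℝⁿ with ‖x‖₂ = 1 and let ξ ∈ ℝⁿ with ‖ξ‖₂ = 1 and xᵀξ = 0. Define φ(t) = f((x + tξ)/‖x + tξ‖₂) for t in a neighborhood of 0. Then φ is twice differentiable at 0 and φ''(0) = ξᵀHξ − xᵀHx − gᵀx. -/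
/-!
Since `x ⊥ ξ` are unit vectors, `‖x + tξ‖₂ = √(1 + t²)`, and since `H` is symmetric,
`φ(t) = ½ (1 + t²)⁻¹ (xᵀHx + 2t xᵀHξ + t² ξᵀHξ) + (1 + t²)^(-1/2) (gᵀx + t gᵀξ)`.
The weight `(1 + t²)^r` is `1 + r t² + O(t⁴)` at `0`, so by the Leibniz rule it contributes
`2r` times the value of the polynomial factor to the second derivative:
`φ''(0) = ½ (2 ξᵀHξ − 2 xᵀHx) − gᵀx`.
-/

open Matrix Filter

section Quadratic

variable {R ι : Type*} [CommRing R] [Fintype ι]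

lemma add_smul_dotProduct_mulVec_add_smul {H : Matrix ι ι R} (hH : H.IsSymm) (x ξ : ι → R) (t : R) :
    (x + t • ξ) ⬝ᵥ H *ᵥ (x + t • ξ) = x ⬝ᵥ H *ᵥ x + 2 * (x ⬝ᵥ H *ᵥ ξ) * t + ξ ⬝ᵥ H *ᵥ ξ * t ^ 2 := by
  have hsymm : ξ ⬝ᵥ H *ᵥ x = x ⬝ᵥ H *ᵥ ξ := by
    rw [dotProduct_mulVec, ← mulVec_transpose, hH.eq, dotProduct_comm]
  simp only [mulVec_add, mulVec_smul, add_dotProduct, dotProduct_add, smul_dotProduct, dotProduct_smul,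
    smul_eq_mul, hsymm]
  ring

lemma add_smul_dotProduct_add_smul (x ξ : ι → R) (t : R) :
    (x + t • ξ) ⬝ᵥ (x + t • ξ) = x ⬝ᵥ x + 2 * (x ⬝ᵥ ξ) * t + ξ ⬝ᵥ ξ * t ^ 2 := by
  simp only [add_dotProduct, dotProduct_add, smul_dotProduct, dotProduct_smul, smul_eq_mul, dotProduct_comm ξ x]
  ring

end Quadratic

section EuclideanNorm

variable {n : ℕ}

lemma enorm_eq_sqrt_dotProduct_self (x : Fin n → ℝ) : _root_.enorm x = √(x ⬝ᵥ x) := by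
  simp only [_root_.enorm, dotProduct, sq]

lemma dotProduct_self_eq_one_of_enorm_eq_one {x : Fin n → ℝ} (hx : _root_.enorm x = 1) : x ⬝ᵥ x = 1 := by
  rwa [enorm_eq_sqrt_dotProduct_self, Real.sqrt_eq_one] at hx

lemma enorm_add_smul_of_orthonormal {x ξ : Fin n → ℝ} (hx : _root_.enorm x = 1) (hξ : _root_.enorm ξ = 1)
    (hxξ : x ⬝ᵥ ξ = 0) (t : ℝ) : _root_.enorm (x + t • ξ) = √(1 + t ^ 2) := by
  rw [enorm_eq_sqrt_dotProduct_self, add_smul_dotProduct_add_smul, dotProduct_self_eq_one_of_enorm_eq_one hx,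
    dotProduct_self_eq_one_of_enorm_eq_one hξ, hxξ]
  congr 1
  ring

end EuclideanNorm

lemma quadObj_smul {n : ℕ} (H : Matrix (Fin n) (Fin n) ℝ) (g : Fin n → ℝ) (c : ℝ) (z : Fin n → ℝ) :
    quadObj H g (c • z) = 1 / 2 * (c ^ 2 * (z ⬝ᵥ H *ᵥ z)) + c * (g ⬝ᵥ z) := by
  simp only [quadObj, mulVec_smul, dotProduct_smul, smul_dotProduct, smul_eq_mul]
  ring

section OneAddSqRpow

variable (r : ℝ)

lemma contDiff_one_add_sq_rpow {k : WithTop ℕ∞} : ContDiff ℝ k fun t : ℝ => (1 + t ^ 2) ^ r :=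
  (contDiff_const.add (contDiff_id.pow 2)).rpow_const_of_ne fun t => by positivity

lemma hasDerivAt_one_add_sq_rpow (t : ℝ) :
    HasDerivAt (fun t : ℝ => (1 + t ^ 2) ^ r) (2 * r * (t * (1 + t ^ 2) ^ (r - 1))) t := by
  have h := ((hasDerivAt_pow 2 t).const_add 1).rpow_const (p := r) (Or.inl (by positivity))
  convert h using 1
  push_cast
  ring

lemma iteratedDeriv_two_one_add_sq_rpow_zero :
    iteratedDeriv 2 (fun t : ℝ => (1 + t ^ 2) ^ r) 0 = 2 * r := by
  have h : HasDerivAt (fun t : ℝ => t * (1 + t ^ 2) ^ (r - 1)) 1 0 := by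
    simpa using (hasDerivAt_id' 0).fun_mul (hasDerivAt_one_add_sq_rpow (r - 1) 0)
  rw [iteratedDeriv_succ', iteratedDeriv_one, funext fun t => (hasDerivAt_one_add_sq_rpow r t).deriv,
    deriv_const_mul _ h.differentiableAt, h.deriv, mul_one]

lemma iteratedDeriv_two_one_add_sq_rpow_mul_zero {p : ℝ → ℝ} (hp : ContDiff ℝ 2 p) :
    iteratedDeriv 2 (fun t => (1 + t ^ 2) ^ r * p t) 0 = 2 * r * p 0 + iteratedDeriv 2 p 0 := by
  rw [iteratedDeriv_fun_mul (contDiff_one_add_sq_rpow r).contDiffAt hp.contDiffAt]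
  simp only [Finset.sum_range_succ, Finset.sum_range_zero, iteratedDeriv_zero, iteratedDeriv_one,
    (hasDerivAt_one_add_sq_rpow r 0).deriv, iteratedDeriv_two_one_add_sq_rpow_zero]
  norm_num
  ring

end OneAddSqRpow

lemma iteratedDeriv_two_quadratic (a b c x : ℝ) :
    iteratedDeriv 2 (fun t => a + b * t + c * t ^ 2) x = 2 * c := by
  have h (t : ℝ) : HasDerivAt (fun t => a + b * t + c * t ^ 2) (b + 2 * c * t) t :=
    ((((hasDerivAt_id' t).const_mul b).const_add a).fun_add
      ((hasDerivAt_pow 2 t).const_mul c)).congr_deriv (by push_cast; ring)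
  rw [iteratedDeriv_succ', iteratedDeriv_one, funext fun t => (h t).deriv]
  simp

noncomputable def sphereProfile (A B C a b : ℝ) : ℝ → ℝ := fun t =>
  1 / 2 * ((1 + t ^ 2) ^ (-1 : ℝ) * (A + B * t + C * t ^ 2)) + (1 + t ^ 2) ^ (-(1 / 2) : ℝ) * (a + b * t)

lemma contDiff_sphereProfile (A B C a b : ℝ) {k : WithTop ℕ∞} : ContDiff ℝ k (sphereProfile A B C a b) :=
  (contDiff_const.mul ((contDiff_one_add_sq_rpow _).mul (by fun_prop))).add
    ((contDiff_one_add_sq_rpow _).mul (by fun_prop))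

lemma iteratedDeriv_two_sphereProfile_zero (A B C a b : ℝ) :
    iteratedDeriv 2 (sphereProfile A B C a b) 0 = C - A - a := by
  unfold sphereProfile
  rw [iteratedDeriv_fun_add (by fun_prop (disch := positivity)) (by fun_prop (disch := positivity)),
    iteratedDeriv_const_mul_field, iteratedDeriv_two_one_add_sq_rpow_mul_zero _ (by fun_prop),
    iteratedDeriv_two_one_add_sq_rpow_mul_zero _ (by fun_prop), iteratedDeriv_two_quadratic]
  have hlinear : iteratedDeriv 2 (fun t : ℝ => a + b * t) 0 = 0 := by simp [iteratedDeriv_succ']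
  rw [hlinear]
  ring

lemma quadObj_normalize_add_smul_of_orthonormal {n : ℕ} {H : Matrix (Fin n) (Fin n) ℝ} (hH : H.IsSymm)
    (g : Fin n → ℝ) {x ξ : Fin n → ℝ} (hx : _root_.enorm x = 1) (hξ : _root_.enorm ξ = 1) (hxξ : x ⬝ᵥ ξ = 0)
    (t : ℝ) :
    quadObj H g ((_root_.enorm (x + t • ξ))⁻¹ • (x + t • ξ)) =
      sphereProfile (x ⬝ᵥ H *ᵥ x) (2 * (x ⬝ᵥ H *ᵥ ξ)) (ξ ⬝ᵥ H *ᵥ ξ) (g ⬝ᵥ x) (g ⬝ᵥ ξ) t := by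
  have hpos : (0 : ℝ) ≤ 1 + t ^ 2 := by positivity
  have hweight : (√(1 + t ^ 2))⁻¹ = (1 + t ^ 2) ^ (-(1 / 2) : ℝ) := by
    rw [Real.sqrt_eq_rpow, Real.rpow_neg hpos]
  have hweight_sq : ((1 + t ^ 2) ^ (-(1 / 2) : ℝ)) ^ 2 = (1 + t ^ 2) ^ (-1 : ℝ) := by
    rw [← Real.rpow_mul_natCast hpos]
    norm_num
  rw [enorm_add_smul_of_orthonormal hx hξ hxξ, quadObj_smul, add_smul_dotProduct_mulVec_add_smul hH, hweight,
    hweight_sq, dotProduct_add, dotProduct_smul, smul_eq_mul, mul_comm t, sphereProfile]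

/-- (Second derivative of `f` along the unit sphere.) For unit vectors `x ⊥ ξ`, the map
`φ(t) = f((x + tξ)/‖x + tξ‖₂)` is twice differentiable at `0` with
`φ''(0) = ξᵀHξ − xᵀHx − gᵀx`. -/
theorem second_derivative_along_sphere {n : ℕ}
    (H : Matrix (Fin n) (Fin n) ℝ) (hH : H.IsSymm) (g : Fin n → ℝ)
    (x ξ : Fin n → ℝ) (hx_unit : _root_.enorm x = 1) (hξ_unit : _root_.enorm ξ = 1)
    (hortho : x ⬝ᵥ ξ = 0)
    (φ : ℝ → ℝ)
    (hφ : φ = fun t : ℝ => quadObj H g ((_root_.enorm (x + t • ξ))⁻¹ • (x + t • ξ))) :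
    (∀ᶠ t in nhds (0 : ℝ), DifferentiableAt ℝ φ t) ∧
      DifferentiableAt ℝ (deriv φ) 0 ∧
      deriv (deriv φ) 0 = ξ ⬝ᵥ H.mulVec ξ - x ⬝ᵥ H.mulVec x - g ⬝ᵥ x := by
  have hprofile : φ = sphereProfile (x ⬝ᵥ H *ᵥ x) (2 * (x ⬝ᵥ H *ᵥ ξ)) (ξ ⬝ᵥ H *ᵥ ξ) (g ⬝ᵥ x) (g ⬝ᵥ ξ) :=
    hφ ▸ funext (quadObj_normalize_add_smul_of_orthonormal hH g hx_unit hξ_unit hortho)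
  have hsmooth : ContDiff ℝ 2 φ := hprofile ▸ contDiff_sphereProfile _ _ _ _ _
  refine ⟨.of_forall fun t => hsmooth.differentiable (by norm_num) t, ?_, ?_⟩
  · simpa [iteratedDeriv_one] using hsmooth.differentiable_iteratedDeriv 1 (by norm_num) 0
  · rw [← iteratedDeriv_one, ← iteratedDeriv_succ', hprofile, iteratedDeriv_two_sphereProfile_zero]
end

section
/- (Positive curvature at the global minimizer in the easy case) Assume λ₁ < 0 and gᵀv₁ ≠ 0. Suppose z* ∈ ℝⁿ and λ ≥ 0 satisfy ‖z*‖₂ = 1, (H + λI)z* + g = 0, and H + λI positive semidefinite. Then λ = −z*ᵀHz* − gᵀz*, λ + λ₁ > 0, and for every ξ ∈ ℝⁿ with ‖ξ‖₂ = 1 and ξᵀz* = 0 one has ξᵀHξ − z*ᵀHz* − gᵀz* = λ + ξᵀHξ ≥ λ + λ₁ > 0. -/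
open Matrix

lemma dotProduct_self_eq_one_of_l2norm_eq_one {n : ℕ} {x : Fin n → ℝ} (hx : l2norm x = 1) :
    x ⬝ᵥ x = 1 := by
  simpa [dotProduct, sq] using Real.sqrt_eq_one.mp hx

section

variable {ι : Type*} [Fintype ι]

lemma Matrix.IsSymm.mul_dotProduct_of_mulVec_eq_smul {R : Type*} [CommSemiring R]
    {A : Matrix ι ι R} (hA : A.IsSymm) {μ : R} {v : ι → R} (hv : A *ᵥ v = μ • v) (z : ι → R) :
    μ * (v ⬝ᵥ z) = v ⬝ᵥ A *ᵥ z := by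
  rw [dotProduct_mulVec, ← mulVec_transpose, hA.eq, hv, smul_dotProduct, smul_eq_mul]

variable [DecidableEq ι] {H : Matrix ι ι ℝ} {c : ℝ}

lemma Matrix.IsHermitian.posSemidef_sub_smul_one (hH : H.IsHermitian)
    (hc : ∀ (μ : ℝ) (w : ι → ℝ), w ≠ 0 → H *ᵥ w = μ • w → c ≤ μ) :
    (H - c • (1 : Matrix ι ι ℝ)).PosSemidef := by
  refine posSemidef_iff_isHermitian_and_spectrum_nonneg.mpr
    ⟨hH.sub (isHermitian_one.smul (IsSelfAdjoint.all c)), fun μ hμ => ?_⟩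
  rw [← spectrum_toLin', ← Module.End.hasEigenvalue_iff_mem_spectrum] at hμ
  obtain ⟨w, hw⟩ := hμ.exists_hasEigenvector
  have hHw : H *ᵥ w = (μ + c) • w := by
    have := hw.apply_eq_smul
    rw [toLin'_apply, sub_mulVec, smul_mulVec, one_mulVec, sub_eq_iff_eq_add] at this
    rw [this, add_smul]
  have := hc _ w hw.2 hHw
  change 0 ≤ μ
  linarith

lemma Matrix.IsHermitian.mul_dotProduct_self_le (hH : H.IsHermitian)
    (hc : ∀ (μ : ℝ) (w : ι → ℝ), w ≠ 0 → H *ᵥ w = μ • w → c ≤ μ) (x : ι → ℝ) :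
    c * (x ⬝ᵥ x) ≤ x ⬝ᵥ H *ᵥ x := by
  have := (hH.posSemidef_sub_smul_one hc).dotProduct_mulVec_nonneg x
  simp only [star_trivial, sub_mulVec, smul_mulVec, one_mulVec, dotProduct_sub,
    dotProduct_smul, smul_eq_mul] at this
  linarith

end

theorem positive_curvature_at_global_min_general {n : ℕ}
    (H : Matrix (Fin n) (Fin n) ℝ) (hH : H.IsSymm) (g : Fin n → ℝ)
    (lam1 : ℝ) (v1 : Fin n → ℝ)
    (hv1_unit : l2norm v1 = 1) (hv1_eig : H.mulVec v1 = lam1 • v1)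
    (hlam1_min : ∀ (μ : ℝ) (w : Fin n → ℝ), w ≠ 0 → H.mulVec w = μ • w → lam1 ≤ μ)
    (hg : g ⬝ᵥ v1 ≠ 0)
    (zs : Fin n → ℝ) (lam : ℝ)
    (hzs_sphere : l2norm zs = 1)
    (hstat : (H + lam • (1 : Matrix (Fin n) (Fin n) ℝ)).mulVec zs + g = 0)
    (hpsd : (H + lam • (1 : Matrix (Fin n) (Fin n) ℝ)).PosSemidef) :
    lam = -(zs ⬝ᵥ H.mulVec zs) - g ⬝ᵥ zs ∧
      lam + lam1 > 0 ∧
      ∀ ξ : Fin n → ℝ, l2norm ξ = 1 → ξ ⬝ᵥ zs = 0 →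
        ξ ⬝ᵥ H.mulVec ξ - zs ⬝ᵥ H.mulVec zs - g ⬝ᵥ zs = lam + ξ ⬝ᵥ H.mulVec ξ ∧
        lam + ξ ⬝ᵥ H.mulVec ξ ≥ lam + lam1 ∧
        lam + lam1 > 0 := by
  set A := H + lam • (1 : Matrix (Fin n) (Fin n) ℝ)
  have hA : A.IsSymm := isHermitian_iff_isSymm.mp hpsd.isHermitian
  have hAx (x : Fin n → ℝ) : A *ᵥ x = H *ᵥ x + lam • x := by
    simp only [A, add_mulVec, smul_mulVec, one_mulVec]
  have hAz : A *ᵥ zs = -g := eq_neg_of_add_eq_zero_left hstat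
  have hAv : A *ᵥ v1 = (lam1 + lam) • v1 := by rw [hAx, hv1_eig, add_smul]
  have hzz := dotProduct_self_eq_one_of_l2norm_eq_one hzs_sphere
  have hvv := dotProduct_self_eq_one_of_l2norm_eq_one hv1_unit
  have hmultiplier : lam = -(zs ⬝ᵥ H *ᵥ zs) - g ⬝ᵥ zs := by
    have := congrArg (zs ⬝ᵥ ·) hAz
    simp only [hAx, dotProduct_add, dotProduct_smul, smul_eq_mul, hzz, dotProduct_neg,
      dotProduct_comm zs g] at this
    linarith
  have hgap_nonneg : 0 ≤ lam1 + lam := by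
    simpa [← hA.mul_dotProduct_of_mulVec_eq_smul hAv, hvv] using hpsd.dotProduct_mulVec_nonneg v1
  have hgap_ne : lam1 + lam ≠ 0 := by
    have := hA.mul_dotProduct_of_mulVec_eq_smul hAv zs
    rw [hAz, dotProduct_neg, dotProduct_comm v1 g] at this
    intro h0
    rw [h0, zero_mul] at this
    exact hg (by linarith)
  have hgap : lam + lam1 > 0 := by linarith [hgap_nonneg.lt_of_ne' hgap_ne]
  refine ⟨hmultiplier, hgap, fun ξ hξ _ => ⟨by linarith, ?_, hgap⟩⟩
  have := (isHermitian_iff_isSymm.mpr hH).mul_dotProduct_self_le hlam1_min ξ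
  rw [dotProduct_self_eq_one_of_l2norm_eq_one hξ, mul_one] at this
  linarith

/-- (Positive curvature at the global minimizer in the easy case.) If `λ₁ < 0`,
`gᵀv₁ ≠ 0`, `‖z*‖₂ = 1`, `(H + λI)z* + g = 0` and `H + λI ⪰ 0` with `λ ≥ 0`, then
`λ = −z*ᵀHz* − gᵀz*`, `λ + λ₁ > 0`, and for every unit `ξ ⊥ z*`,
`ξᵀHξ − z*ᵀHz* − gᵀz* = λ + ξᵀHξ ≥ λ + λ₁ > 0`. -/
theorem positive_curvature_at_global_min {n : ℕ}
    (H : Matrix (Fin n) (Fin n) ℝ) (hH : H.IsSymm) (g : Fin n → ℝ)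
    (lam1 : ℝ) (v1 : Fin n → ℝ)
    (hv1_unit : l2norm v1 = 1) (hv1_eig : H.mulVec v1 = lam1 • v1)
    (hlam1_min : ∀ (μ : ℝ) (w : Fin n → ℝ), w ≠ 0 → H.mulVec w = μ • w → lam1 ≤ μ)
    (hlam1_neg : lam1 < 0) (hg : g ⬝ᵥ v1 ≠ 0)
    (zs : Fin n → ℝ) (lam : ℝ) (hlam_nonneg : 0 ≤ lam)
    (hzs_sphere : l2norm zs = 1)
    (hstat : (H + lam • (1 : Matrix (Fin n) (Fin n) ℝ)).mulVec zs + g = 0)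
    (hpsd : (H + lam • (1 : Matrix (Fin n) (Fin n) ℝ)).PosSemidef) :
    lam = -(zs ⬝ᵥ H.mulVec zs) - g ⬝ᵥ zs ∧
      lam + lam1 > 0 ∧
      ∀ ξ : Fin n → ℝ, l2norm ξ = 1 → ξ ⬝ᵥ zs = 0 →
        ξ ⬝ᵥ H.mulVec ξ - zs ⬝ᵥ H.mulVec zs - g ⬝ᵥ zs = lam + ξ ⬝ᵥ H.mulVec ξ ∧
        lam + ξ ⬝ᵥ H.mulVec ξ ≥ lam + lam1 ∧
        lam + lam1 > 0 :=
  positive_curvature_at_global_min_general H hH g lam1 v1 hv1_unit hv1_eig hlam1_min hg zs lam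
    hzs_sphere hstat hpsd
end

section
/- (Closed-form solution of label propagation) Let S be an n×n real symmetric matrix with nonnegative entries, where n = l + u, let D be the diagonal matrix with D_ii = Σ_k S_ik, and let L = D − S. Partition indices into the first l (labeled) and last u (unlabeled) coordinates, writing S_uu, D_uu, S_ul for the corresponding blocks of S and D. Assume D_uu − S_uu is invertible, and let y_l ∈ ℝˡ. Define ŷ ∈ ℝⁿ by ŷ restricted to the labeled coordinates equal to y_l and ŷ restricted to the unlabeled coordinates equal to (D_uu − S_uu)⁻¹ S_ul y_l. Then ŷ minimizes the energy wᵀLw = (1/2)·Σ_{i,j} S_ij (w_i − w_j)² over all w ∈ ℝⁿ whose first l coordinates equal y_l; i.e. ŷᵀLŷ ≤ wᵀLw for every such w. -/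
/-!
Write `w = ŷ + d`. On the unlabeled coordinates `(L ŷ)_u = (D_uu - S_uu) ŷ_u - S_ul y_l = 0`,
so `ŷ` is harmonic there, while `d` vanishes on the labeled coordinates; hence `d ⬝ L ŷ = 0`
and, `L` being symmetric, `wᵀ L w = ŷᵀ L ŷ + dᵀ L d ≥ ŷᵀ L ŷ` because the Laplacian form
`dᵀ L d = ½ Σ S_ij (d_i - d_j)²` is nonnegative.
-/

open Matrix

variable {R : Type*} [CommRing R]

theorem dotProduct_mulVec_le_of_sub_dotProduct_mulVec_eq_zero [PartialOrder R] [IsOrderedRing R]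
    {n : Type*} [Fintype n] {M : Matrix n n R} (hM : M.IsSymm)
    (hM_nonneg : ∀ d, 0 ≤ d ⬝ᵥ M *ᵥ d) {y w : n → R} (h : (w - y) ⬝ᵥ M *ᵥ y = 0) :
    y ⬝ᵥ M *ᵥ y ≤ w ⬝ᵥ M *ᵥ w := by
  set d := w - y
  have hsymm : y ⬝ᵥ M *ᵥ d = d ⬝ᵥ M *ᵥ y := by
    rw [dotProduct_mulVec, ← mulVec_transpose, hM.eq, dotProduct_comm]
  have hexpand : w ⬝ᵥ M *ᵥ w = y ⬝ᵥ M *ᵥ y + 2 * (d ⬝ᵥ M *ᵥ y) + d ⬝ᵥ M *ᵥ d := by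
    rw [show w = y + d by simp [d], mulVec_add, dotProduct_add, add_dotProduct,
      add_dotProduct, hsymm]
    ring
  rw [hexpand, h, mul_zero, add_zero]
  exact le_add_of_nonneg_right (hM_nonneg d)

section Laplacian

variable {n : Type*} [Fintype n] [DecidableEq n]

def laplacian (S : Matrix n n R) : Matrix n n R :=
  diagonal (fun i => ∑ k, S i k) - S

theorem laplacian_isSymm {S : Matrix n n R} (hS : S.IsSymm) : (laplacian S).IsSymm :=
  (isSymm_diagonal _).sub hS

theorem dotProduct_laplacian_mulVec (S : Matrix n n R) (d : n → R) :
    d ⬝ᵥ laplacian S *ᵥ d = ∑ i, ∑ j, S i j * (d i * (d i - d j)) := by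
  rw [laplacian, sub_mulVec, dotProduct_sub]
  simp only [dotProduct, mulVec_diagonal]
  simp only [mulVec, dotProduct, Finset.sum_mul, Finset.mul_sum, ← Finset.sum_sub_distrib]
  refine Finset.sum_congr rfl fun i _ => Finset.sum_congr rfl fun j _ => ?_
  ring

theorem two_mul_dotProduct_laplacian_mulVec {S : Matrix n n R} (hS : S.IsSymm) (d : n → R) :
    2 * (d ⬝ᵥ laplacian S *ᵥ d) = ∑ i, ∑ j, S i j * (d i - d j) ^ 2 := by
  have hswap : ∑ i, ∑ j, S i j * (d j * (d j - d i)) =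
      ∑ i, ∑ j, S i j * (d i * (d i - d j)) := by
    rw [Finset.sum_comm]
    simp_rw [hS.apply]
  rw [dotProduct_laplacian_mulVec, two_mul]
  nth_rw 2 [← hswap]
  simp only [← Finset.sum_add_distrib]
  refine Finset.sum_congr rfl fun i _ => Finset.sum_congr rfl fun j _ => ?_
  ring

theorem dotProduct_laplacian_mulVec_nonneg [LinearOrder R] [IsStrictOrderedRing R]
    {S : Matrix n n R} (hS : S.IsSymm) (hS_nonneg : ∀ i j, 0 ≤ S i j) (d : n → R) :
    0 ≤ d ⬝ᵥ laplacian S *ᵥ d := by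
  have h : 0 ≤ 2 * (d ⬝ᵥ laplacian S *ᵥ d) := by
    rw [two_mul_dotProduct_laplacian_mulVec hS]
    exact Finset.sum_nonneg fun i _ => Finset.sum_nonneg fun j _ =>
      mul_nonneg (hS_nonneg i j) (sq_nonneg _)
  exact nonneg_of_mul_nonneg_right h two_pos

theorem laplacian_submatrix_of_ne {m p : Type*} (S : Matrix n n R) {f : m → n} {g : p → n}
    (hfg : ∀ i j, f i ≠ g j) : (laplacian S).submatrix f g = -S.submatrix f g := by
  ext i j
  simp [laplacian, diagonal_apply_ne _ (hfg i j)]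

end Laplacian

theorem mulVec_sumElim_comp_inr {m p : Type*} [Fintype m] [Fintype p]
    (M : Matrix (m ⊕ p) (m ⊕ p) R) (x : m → R) (y : p → R) :
    (M *ᵥ Sum.elim x y) ∘ Sum.inr = M.submatrix Sum.inr Sum.inl *ᵥ x +
      M.submatrix Sum.inr Sum.inr *ᵥ y := by
  ext j
  change M (Sum.inr j) ⬝ᵥ Sum.elim x y = _
  rw [← Sum.elim_comp_inl_inr (M (Sum.inr j)), sumElim_dotProduct_sumElim]
  rfl

theorem laplacian_mulVec_harmonicExtension_comp_inr {m p : Type*} [Fintype m] [Fintype p]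
    [DecidableEq m] [DecidableEq p] {S : Matrix (m ⊕ p) (m ⊕ p) R}
    (hA : IsUnit ((laplacian S).submatrix Sum.inr Sum.inr).det) (x : m → R) :
    (laplacian S *ᵥ Sum.elim x (((laplacian S).submatrix Sum.inr Sum.inr)⁻¹ *ᵥ
      (S.submatrix Sum.inr Sum.inl *ᵥ x))) ∘ Sum.inr = 0 := by
  rw [mulVec_sumElim_comp_inr, laplacian_submatrix_of_ne S (fun _ _ => Sum.inr_ne_inl),
    mulVec_mulVec, mul_nonsing_inv _ hA, one_mulVec, neg_mulVec, neg_add_cancel]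

/-- (Closed-form solution of label propagation.) Let `S` be a symmetric nonnegative
similarity matrix on `l` labeled plus `u` unlabeled nodes, `D` its degree matrix and
`L = D − S` the graph Laplacian. If `D_uu − S_uu` is invertible, then the vector `ŷ`
agreeing with `y_l` on labeled nodes and equal to `(D_uu − S_uu)⁻¹ S_ul y_l` on
unlabeled nodes minimizes the energy `wᵀLw` over all `w` agreeing with `y_l` on the
labeled nodes. -/
theorem label_propagation_closed_form {l u : ℕ}
    (S : Matrix (Fin l ⊕ Fin u) (Fin l ⊕ Fin u) ℝ)
    (hSsymm : S.IsSymm) (hSnonneg : ∀ i j, 0 ≤ S i j)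
    (D : Matrix (Fin l ⊕ Fin u) (Fin l ⊕ Fin u) ℝ)
    (hD : D = Matrix.diagonal (fun i => ∑ k, S i k))
    (L : Matrix (Fin l ⊕ Fin u) (Fin l ⊕ Fin u) ℝ) (hL : L = D - S)
    (yl : Fin l → ℝ)
    (hinv : IsUnit (D.submatrix Sum.inr Sum.inr - S.submatrix Sum.inr Sum.inr).det)
    (yhat : Fin l ⊕ Fin u → ℝ)
    (hyhat : yhat = Sum.elim yl
      ((D.submatrix Sum.inr Sum.inr - S.submatrix Sum.inr Sum.inr)⁻¹.mulVec
        ((S.submatrix Sum.inr Sum.inl).mulVec yl))) :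
    ∀ w : Fin l ⊕ Fin u → ℝ, (∀ i, w (Sum.inl i) = yl i) →
      yhat ⬝ᵥ L.mulVec yhat ≤ w ⬝ᵥ L.mulVec w := by
  intro w hw
  subst hL hD
  have hharmonic : (laplacian S *ᵥ yhat) ∘ Sum.inr = 0 :=
    hyhat ▸ laplacian_mulVec_harmonicExtension_comp_inr hinv yl
  have hfixed : (w - yhat) ∘ Sum.inl = 0 := by
    ext i
    simp [hw, hyhat]
  refine dotProduct_mulVec_le_of_sub_dotProduct_mulVec_eq_zero (laplacian_isSymm hSsymm)
    (dotProduct_laplacian_mulVec_nonneg hSsymm hSnonneg) ?_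
  change (w - yhat) ⬝ᵥ laplacian S *ᵥ yhat = 0
  rw [← Sum.elim_comp_inl_inr (w - yhat), ← Sum.elim_comp_inl_inr (laplacian S *ᵥ yhat),
    sumElim_dotProduct_sumElim, hfixed, hharmonic, zero_dotProduct, dotProduct_zero, add_zero]
end
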